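/- arXiv:2108.12024 — 2 statements merged into one kernel-verified Lean document; each statement's English description precedes it below -/
import Mathlib

section
/- The function e₂(R) = 2(R⁴ - 18R² + 9)/(√3·R·(R² + 3)^(3/2)) solves the stationary linearized equation e₂''(R) + (2/R)e₂'(R) + 45·e₂(R)/(3 + R²)² = 0 for all R > 0. -/
open Real Filter Topology

/-!
Write `e₂ = f · (R² + 3)^(-3/2)` with `f(R) = 2(R⁴ - 18R² + 9)/(√3 R)` rational. Since
`(f · (R² + 3)^s)' = (f' · (R² + 3) + 2sRf) · (R² + 3)^(s-1)`, each derivative keeps this shape with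
a new rational prefactor and the exponent lowered by one. Factoring out `(R² + 3)^(-7/2)`, the
equation becomes an identity between rational functions of `R`.
-/

theorem HasDerivAt.mul_rpow_sq_add {f : ℝ → ℝ} {f' x : ℝ} (a s : ℝ) (hf : HasDerivAt f f' x)
    (hx : x ^ 2 + a ≠ 0) :
    HasDerivAt (fun y => f y * (y ^ 2 + a) ^ s)
      ((f' * (x ^ 2 + a) + 2 * s * x * f x) * (x ^ 2 + a) ^ (s - 1)) x := by
  have hq : HasDerivAt (fun y => y ^ 2 + a) (2 * x) x := by
    simpa using (hasDerivAt_pow 2 x).add_const a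
  refine (hf.mul (hq.rpow_const (p := s) (Or.inl hx))).congr_deriv ?_
  rw [rpow_sub_one hx]
  field_simp

section e2Profile

variable (c : ℝ) {x : ℝ}

theorem hasDerivAt_e2Profile (hx : x ≠ 0) :
    HasDerivAt (fun y => c * (y ^ 4 - 18 * y ^ 2 + 9) / y * (y ^ 2 + 3) ^ (-(3 / 2) : ℝ))
      (c * (45 * x ^ 4 - 90 * x ^ 2 - 27) / x ^ 2 * (x ^ 2 + 3) ^ (-(5 / 2) : ℝ)) x := by
  have hf : HasDerivAt (fun y => c * (y ^ 4 - 18 * y ^ 2 + 9) / y)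
      (c * (3 * x ^ 4 - 18 * x ^ 2 - 9) / x ^ 2) x := by
    refine (((((hasDerivAt_pow 4 x).sub ((hasDerivAt_pow 2 x).const_mul 18)).add_const 9).const_mul
      c).div (hasDerivAt_id x) hx).congr_deriv ?_
    simp only [Pi.sub_apply, id]
    field_simp
    ring
  have h := hf.mul_rpow_sq_add 3 (-(3 / 2)) (by positivity)
  rw [show (-(3 / 2) : ℝ) - 1 = -(5 / 2) by norm_num] at h
  refine h.congr_deriv ?_
  field_simp
  ring

theorem hasDerivAt_e2Profile_deriv (hx : x ≠ 0) :
    HasDerivAt (fun y => c * (45 * y ^ 4 - 90 * y ^ 2 - 27) / y ^ 2 * (y ^ 2 + 3) ^ (-(5 / 2) : ℝ))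
      (c * (-135 * x ^ 6 + 720 * x ^ 4 + 189 * x ^ 2 + 162) / x ^ 3
        * (x ^ 2 + 3) ^ (-(7 / 2) : ℝ)) x := by
  have hf : HasDerivAt (fun y => c * (45 * y ^ 4 - 90 * y ^ 2 - 27) / y ^ 2)
      (c * (90 * x ^ 4 + 54) / x ^ 3) x := by
    refine (((((hasDerivAt_pow 4 x).const_mul 45).sub ((hasDerivAt_pow 2 x).const_mul 90)).sub_const
      27).const_mul c).div (hasDerivAt_pow 2 x) (pow_ne_zero 2 hx) |>.congr_deriv ?_
    simp only [Pi.sub_apply]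
    field_simp
    ring
  have h := hf.mul_rpow_sq_add 3 (-(5 / 2)) (by positivity)
  rw [show (-(5 / 2) : ℝ) - 1 = -(7 / 2) by norm_num] at h
  refine h.congr_deriv ?_
  field_simp
  ring

end e2Profile

/-- `e₂(R) = 2(R⁴-18R²+9)/(√3·R·(R²+3)^(3/2))` solves the stationary linearized equation
`e₂'' + (2/R)e₂' + 45 e₂/(3+R²)² = 0` for all `R > 0`. -/
theorem e2_solves_linearized (e₂ : ℝ → ℝ)
    (he : ∀ R : ℝ, e₂ R = 2 * (R ^ 4 - 18 * R ^ 2 + 9)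
      / (Real.sqrt 3 * R * (R ^ 2 + 3) ^ ((3:ℝ)/2))) :
    ∀ R : ℝ, 0 < R →
      deriv (deriv e₂) R + (2 / R) * deriv e₂ R + 45 * e₂ R / (3 + R ^ 2) ^ 2 = 0 := by
  intro R hR
  set c := 2 / √3
  -- at `y = 0` both sides are `0`, by the convention `x / 0 = 0`
  have he₂ : e₂ = fun y => c * (y ^ 4 - 18 * y ^ 2 + 9) / y * (y ^ 2 + 3) ^ (-(3 / 2) : ℝ) := by
    funext y
    rw [he, rpow_neg (by positivity)]
    ring
  have hderiv : deriv e₂ =ᶠ[𝓝 R] fun y =>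
      c * (45 * y ^ 4 - 90 * y ^ 2 - 27) / y ^ 2 * (y ^ 2 + 3) ^ (-(5 / 2) : ℝ) := by
    filter_upwards [eventually_ne_nhds hR.ne'] with y hy
    rw [he₂, (hasDerivAt_e2Profile c hy).deriv]
  rw [hderiv.deriv_eq, (hasDerivAt_e2Profile_deriv c hR.ne').deriv, hderiv.eq_of_nhds, he₂]
  have hpos : 0 < R ^ 2 + 3 := by positivity
  have hpow₅ : (R ^ 2 + 3) ^ (-(5 / 2) : ℝ) = (R ^ 2 + 3) * (R ^ 2 + 3) ^ (-(7 / 2) : ℝ) := by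
    rw [mul_comm, ← rpow_add_one hpos.ne']; norm_num
  have hpow₃ : (R ^ 2 + 3) ^ (-(3 / 2) : ℝ) = (R ^ 2 + 3) ^ 2 * (R ^ 2 + 3) ^ (-(7 / 2) : ℝ) := by
    rw [mul_comm, ← rpow_add_natCast hpos.ne']; norm_num
  beta_reduce
  rw [hpow₅, hpow₃]
  field_simp
  ring
end

section
/- For t > 0 and λ smooth and positive, ∂ₜ²(Q_{λ(t)}(r)) - √3·(2λ(t)λ''(t) - λ'(t)²)/(4r·λ(t)^(3/2)) = O(r^(-3)) as r → ∞; precisely, there is a constant C (depending on λ(t), λ'(t), λ''(t)) such that for all r ≥ λ(t), |∂ₜ²(Q_{λ(t)}(r)) - √3(2λ(t)λ''(t) - λ'(t)²)/(4 r λ(t)^(3/2))| ≤ C·λ(t)^(3/2)·(|λ''(t)|λ(t) + λ'(t)²)/r³. -/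
/-!
Write `Q_λ(r) = g(λ)` with `g x = √3 √x / σ`, `σ = √(r² + 3x²)`. By the chain rule
`∂ₜ² Q = g''(λ) λ'² + g'(λ) λ''`, and in powers of `σ`
`g' = √3 (σ⁻¹ - 6x²σ⁻³) / (2√x)`, `g'' = √3 (-σ⁻¹ - 24x²σ⁻³ + 108x⁴σ⁻⁵) / (4x√x)`.
For `x ≤ r ≤ σ` every term but `σ⁻¹` is `O(x²/r³)`, and so is `σ⁻¹ - r⁻¹ = 3x²/(rσ(σ + r))`;
replacing `σ⁻¹` by `r⁻¹` leaves exactly the leading term `√3 (2λλ'' - λ'²) / (4rλ^{3/2})`.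
-/

open Real

theorem deriv_deriv_comp_of_hasDerivAt {g g' lam : ℝ → ℝ} {g'' t : ℝ}
    (hg : ∀ s, HasDerivAt g (g' (lam s)) (lam s)) (hg' : HasDerivAt g' g'' (lam t))
    (hlam : Differentiable ℝ lam) (hlam' : DifferentiableAt ℝ (deriv lam) t) :
    deriv (deriv (g ∘ lam)) t = g'' * deriv lam t ^ 2 + g' (lam t) * deriv (deriv lam) t := by
  have hderiv : deriv (g ∘ lam) = g' ∘ lam * deriv lam :=
    funext fun s => ((hg s).comp s (hlam s).hasDerivAt).deriv
  rw [hderiv, ((hg'.comp t (hlam t).hasDerivAt).mul hlam'.hasDerivAt).deriv]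
  simp only [Function.comp_apply]
  ring

theorem abs_inv_sub_inv_le {r σ : ℝ} (hr : 0 < r) (h : r ≤ σ) :
    |σ⁻¹ - r⁻¹| ≤ (σ ^ 2 - r ^ 2) / (2 * r ^ 3) := by
  have hσ : 0 < σ := hr.trans_le h
  rw [abs_of_nonpos (by rw [sub_nonpos]; exact inv_anti₀ hr h),
    show -(σ⁻¹ - r⁻¹) = (σ ^ 2 - r ^ 2) / (r * σ * (σ + r)) by field_simp; ring]
  refine div_le_div_of_nonneg_left (by nlinarith) (by positivity) ?_
  calc 2 * r ^ 3 = r * r * (r + r) := by ring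
    _ ≤ r * σ * (σ + r) := by gcongr

theorem rpow_three_halves_eq_mul_sqrt {x : ℝ} (hx : 0 ≤ x) : x ^ ((3 : ℝ) / 2) = x * √x := by
  rw [sqrt_eq_rpow, ← rpow_one_add' hx (by norm_num)]
  norm_num

namespace Soliton

noncomputable def profile (r x : ℝ) : ℝ := √3 * √x / √(r ^ 2 + 3 * x ^ 2)

noncomputable def profileDeriv (r x : ℝ) : ℝ :=
  √3 * ((√(r ^ 2 + 3 * x ^ 2))⁻¹ - 6 * x ^ 2 / √(r ^ 2 + 3 * x ^ 2) ^ 3) / (2 * √x)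

noncomputable def profileDeriv2 (r x : ℝ) : ℝ :=
  √3 * (-(√(r ^ 2 + 3 * x ^ 2))⁻¹ - 24 * x ^ 2 / √(r ^ 2 + 3 * x ^ 2) ^ 3
    + 108 * x ^ 4 / √(r ^ 2 + 3 * x ^ 2) ^ 5) / (4 * x * √x)

theorem hasDerivAt_sqrt_sq_add_three_mul_sq (r : ℝ) {x : ℝ} (hx : x ≠ 0) :
    HasDerivAt (fun x => √(r ^ 2 + 3 * x ^ 2)) (3 * x / √(r ^ 2 + 3 * x ^ 2)) x := by
  refine ((((hasDerivAt_pow 2 x).const_mul 3).const_add (r ^ 2)).sqrt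
    (by positivity)).congr_deriv ?_
  field_simp
  ring

theorem hasDerivAt_profile (r : ℝ) {x : ℝ} (hx : 0 < x) :
    HasDerivAt (profile r) (profileDeriv r x) x := by
  have hσ : 0 < √(r ^ 2 + 3 * x ^ 2) := sqrt_pos.2 (by positivity)
  refine (((hasDerivAt_sqrt hx.ne').const_mul √3).fun_div
    (hasDerivAt_sqrt_sq_add_three_mul_sq r hx.ne') hσ.ne').congr_deriv ?_
  unfold profileDeriv
  field_simp
  rw [sq_sqrt hx.le]
  ring

theorem hasDerivAt_profileDeriv (r : ℝ) {x : ℝ} (hx : 0 < x) :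
    HasDerivAt (profileDeriv r) (profileDeriv2 r x) x := by
  have hσ : 0 < √(r ^ 2 + 3 * x ^ 2) := sqrt_pos.2 (by positivity)
  have hdσ := hasDerivAt_sqrt_sq_add_three_mul_sq r hx.ne'
  have hbracket := (hdσ.inv hσ.ne').fun_sub
    (((hasDerivAt_pow 2 x).const_mul 6).fun_div (hdσ.fun_pow 3) (by positivity))
  refine ((hbracket.const_mul √3).fun_div ((hasDerivAt_sqrt hx.ne').const_mul 2)
    (by positivity)).congr_deriv ?_
  unfold profileDeriv2
  simp only [Pi.inv_apply]
  set σ := √(r ^ 2 + 3 * x ^ 2)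
  field_simp
  rw [sq_sqrt hx.le]
  ring

theorem le_sqrt_sq_add_three_mul_sq (r x : ℝ) : r ≤ √(r ^ 2 + 3 * x ^ 2) :=
  le_sqrt_of_sq_le (by nlinarith)

theorem abs_inv_sqrt_sub_inv_le {r : ℝ} (hr : 0 < r) (x : ℝ) :
    |(√(r ^ 2 + 3 * x ^ 2))⁻¹ - r⁻¹| ≤ 3 * x ^ 2 / (2 * r ^ 3) := by
  convert abs_inv_sub_inv_le hr (le_sqrt_sq_add_three_mul_sq r x) using 2
  rw [sq_sqrt (by positivity)]
  ring

theorem abs_profileDeriv_sub_le {r x : ℝ} (hx : 0 < x) (hxr : x ≤ r) :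
    |profileDeriv r x - √3 / (2 * √x * r)| ≤ 4 * √3 * (x * √x) / r ^ 3 := by
  have hr : 0 < r := hx.trans_le hxr
  have hrσ := le_sqrt_sq_add_three_mul_sq r x
  unfold profileDeriv
  set σ := √(r ^ 2 + 3 * x ^ 2)
  have hσ : 0 < σ := hr.trans_le hrσ
  have hsplit : √3 * (σ⁻¹ - 6 * x ^ 2 / σ ^ 3) / (2 * √x) - √3 / (2 * √x * r)
      = √3 / (2 * √x) * ((σ⁻¹ - r⁻¹) - 6 * x ^ 2 / σ ^ 3) := by
    field_simp
    ring
  have h6 : 6 * x ^ 2 / σ ^ 3 ≤ 6 * x ^ 2 / r ^ 3 := by gcongr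
  rw [hsplit, abs_mul, abs_of_pos (by positivity)]
  calc √3 / (2 * √x) * |σ⁻¹ - r⁻¹ - 6 * x ^ 2 / σ ^ 3|
      ≤ √3 / (2 * √x) * (3 * x ^ 2 / (2 * r ^ 3) + 6 * x ^ 2 / r ^ 3) := by
        gcongr
        refine (abs_sub _ _).trans (add_le_add (abs_inv_sqrt_sub_inv_le hr x) ?_)
        rw [abs_of_nonneg (by positivity)]
        exact h6
    _ = 15 / 4 * √3 * (x * √x) / r ^ 3 := by
        field_simp
        rw [sq_sqrt hx.le]
        ring
    _ ≤ 4 * √3 * (x * √x) / r ^ 3 := by gcongr; norm_num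

theorem abs_profileDeriv2_add_le {r x : ℝ} (hx : 0 < x) (hxr : x ≤ r) :
    |profileDeriv2 r x + √3 / (4 * (x * √x) * r)| ≤ 34 * √3 * √x / r ^ 3 := by
  have hr : 0 < r := hx.trans_le hxr
  have hrσ := le_sqrt_sq_add_three_mul_sq r x
  unfold profileDeriv2
  set σ := √(r ^ 2 + 3 * x ^ 2)
  have hσ : 0 < σ := hr.trans_le hrσ
  have hsplit : √3 * (-σ⁻¹ - 24 * x ^ 2 / σ ^ 3 + 108 * x ^ 4 / σ ^ 5) / (4 * x * √x)
        + √3 / (4 * (x * √x) * r)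
      = √3 / (4 * (x * √x)) * (-(σ⁻¹ - r⁻¹) - 24 * x ^ 2 / σ ^ 3 + 108 * x ^ 4 / σ ^ 5) := by
    field_simp
    ring
  have h24 : 24 * x ^ 2 / σ ^ 3 ≤ 24 * x ^ 2 / r ^ 3 := by gcongr
  have h108 : 108 * x ^ 4 / σ ^ 5 ≤ 108 * x ^ 2 / r ^ 3 := by
    rw [div_le_div_iff₀ (by positivity) (by positivity)]
    calc 108 * x ^ 4 * r ^ 3 = 108 * x ^ 2 * (x * x * r ^ 3) := by ring
      _ ≤ 108 * x ^ 2 * (σ * σ * σ ^ 3) := by gcongr <;> linarith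
      _ = 108 * x ^ 2 * σ ^ 5 := by ring
  rw [hsplit, abs_mul, abs_of_pos (by positivity)]
  calc √3 / (4 * (x * √x)) * |-(σ⁻¹ - r⁻¹) - 24 * x ^ 2 / σ ^ 3 + 108 * x ^ 4 / σ ^ 5|
      ≤ √3 / (4 * (x * √x)) * (3 * x ^ 2 / (2 * r ^ 3) + 24 * x ^ 2 / r ^ 3
          + 108 * x ^ 2 / r ^ 3) := by
        gcongr
        refine (abs_add_le _ _).trans (add_le_add ((abs_sub _ _).trans (add_le_add ?_ ?_)) ?_)
        · rw [abs_neg]; exact abs_inv_sqrt_sub_inv_le hr x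
        · rw [abs_of_nonneg (by positivity)]; exact h24
        · rw [abs_of_nonneg (by positivity)]; exact h108
    _ = 267 / 8 * √3 * √x / r ^ 3 := by
        field_simp
        rw [sq_sqrt hx.le]
        ring
    _ ≤ 34 * √3 * √x / r ^ 3 := by gcongr; norm_num

theorem abs_second_deriv_sub_leading_le {r x : ℝ} (hx : 0 < x) (hxr : x ≤ r) (b c : ℝ) :
    |profileDeriv2 r x * b ^ 2 + profileDeriv r x * c
        - √3 * (2 * x * c - b ^ 2) / (4 * r * (x * √x))|
      ≤ 34 * √3 / x * (x * √x) * (|c| * x + b ^ 2) / r ^ 3 := by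
  have hr : 0 < r := hx.trans_le hxr
  have hsplit : profileDeriv2 r x * b ^ 2 + profileDeriv r x * c
        - √3 * (2 * x * c - b ^ 2) / (4 * r * (x * √x))
      = c * (profileDeriv r x - √3 / (2 * √x * r))
        + b ^ 2 * (profileDeriv2 r x + √3 / (4 * (x * √x) * r)) := by
    field_simp
    ring
  rw [hsplit]
  calc _ ≤ |c| * (4 * √3 * (x * √x) / r ^ 3) + b ^ 2 * (34 * √3 * √x / r ^ 3) := by
        refine (abs_add_le _ _).trans (add_le_add ?_ ?_) <;> rw [abs_mul]
        · exact mul_le_mul_of_nonneg_left (abs_profileDeriv_sub_le hx hxr) (abs_nonneg c)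
        · rw [abs_sq]
          exact mul_le_mul_of_nonneg_left (abs_profileDeriv2_add_le hx hxr) (sq_nonneg b)
    _ ≤ |c| * (34 * √3 * (x * √x) / r ^ 3) + b ^ 2 * (34 * √3 * √x / r ^ 3) := by
        gcongr; norm_num
    _ = 34 * √3 / x * (x * √x) * (|c| * x + b ^ 2) / r ^ 3 := by
        field_simp

end Soliton

open Soliton

/-- For the rescaled soliton `Q_{λ(t)}(r) = √3 √(λ(t)) / √(r² + 3λ(t)²)` with `λ`
twice continuously differentiable and positive, at each fixed time `t` there is a
constant `C` such that for all `r ≥ λ(t)`,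
`|∂ₜ²(Q_{λ(t)}(r)) - √3(2λλ'' - λ'²)/(4rλ^(3/2))| ≤ C λ^(3/2)(|λ''|λ + λ'²)/r³`. -/
theorem soliton_second_time_derivative_expansion (lam : ℝ → ℝ)
    (hlam : ContDiff ℝ 2 lam) (hpos : ∀ s, 0 < lam s) (t : ℝ) :
    ∃ C : ℝ, 0 < C ∧ ∀ r : ℝ, lam t ≤ r →
      |deriv (deriv (fun s =>
          Real.sqrt 3 * Real.sqrt (lam s) / Real.sqrt (r ^ 2 + 3 * lam s ^ 2))) t
        - Real.sqrt 3 * (2 * lam t * deriv (deriv lam) t - (deriv lam t) ^ 2)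
          / (4 * r * lam t ^ ((3:ℝ)/2))|
      ≤ C * lam t ^ ((3:ℝ)/2) * (|deriv (deriv lam) t| * lam t + (deriv lam t) ^ 2)
          / r ^ 3 := by
  have hdiff : Differentiable ℝ lam := hlam.differentiable (by norm_num)
  have hdiff' : Differentiable ℝ (deriv lam) := by
    simpa using hlam.differentiable_iteratedDeriv 1 (by norm_num)
  have ht := hpos t
  refine ⟨34 * √3 / lam t, by positivity, fun r hr => ?_⟩
  have hchain : deriv (deriv (profile r ∘ lam)) t
      = profileDeriv2 r (lam t) * deriv lam t ^ 2 + profileDeriv r (lam t) * deriv (deriv lam) t :=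
    deriv_deriv_comp_of_hasDerivAt (fun s => hasDerivAt_profile r (hpos s))
      (hasDerivAt_profileDeriv r ht) hdiff (hdiff' t)
  rw [show (fun s => √3 * √(lam s) / √(r ^ 2 + 3 * lam s ^ 2)) = profile r ∘ lam from rfl,
    hchain, rpow_three_halves_eq_mul_sqrt ht.le]
  exact abs_second_deriv_sub_leading_le ht hr _ _
end
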